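/- arXiv:2511.12736 — 3 statements merged into one kernel-verified Lean document; each statement's English description precedes it below -/
import Mathlib

section
/- Let T be a tree of height ω₁ and let S ⊆ T be an arbitrary subset, regarded as a tree with the order inherited from T. Then NS^S ⊆ (NS^T)↾S; that is, every B ⊆ S with B ∈ NS^S satisfies B ∈ NS^T. -/
open Set

/-- The first uncountable ordinal `ω₁`. -/
noncomputable def omega1 : Ordinal := Ordinal.omega 1

section TreeDefs

variable {T : Type*} [PartialOrder T]

/-- In a tree, the set of strict predecessors of any node is linearly ordered. -/
def PredsChain (T : Type*) [PartialOrder T] : Prop :=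
  ∀ t : T, IsChain (· ≤ ·) {s : T | s < t}

/-- `ht` is *the* height function of the tree: it is strictly monotone on comparable pairs and
the heights of the strict predecessors of `t` are exactly the ordinals below `ht t`; together
with `PredsChain` this says that the set `t↓` of strict predecessors of `t` is well-ordered
with order type `ht t`. -/
def IsHeightFun (ht : T → Ordinal) : Prop :=
  (∀ s t : T, s < t → ht s < ht t) ∧
  ∀ t : T, ∀ o : Ordinal, o < ht t → ∃ s : T, s < t ∧ ht s = o

/-- The tree has height `ω₁`: every node has height `< ω₁` and every countable ordinal is the
height of some node. -/
def HeightOmega1 (ht : T → Ordinal) : Prop :=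
  (∀ t : T, ht t < omega1) ∧ ∀ o : Ordinal, o < omega1 → ∃ t : T, ht t = o

/-- All levels of the tree are countable. -/
def CountableLevels (ht : T → Ordinal) : Prop :=
  ∀ o : Ordinal, {t : T | ht t = o}.Countable

/-- A tree of height `ω₁` is well-pruned if every node has successors in all later levels. -/
def WellPruned (ht : T → Ordinal) : Prop :=
  ∀ o o' : Ordinal, o < o' → o' < omega1 →
    ∀ s : T, ht s = o → ∃ t : T, s < t ∧ ht t = o'

/-- A special subset of a tree: a union of countably many antichains. -/
def IsSpecialSet (U : Set T) : Prop :=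
  ∃ A : ℕ → Set T, (∀ n : ℕ, IsAntichain (· ≤ ·) (A n)) ∧ U ⊆ ⋃ n, A n

/-- Membership in the ideal `NS^T`: there is a regressive map on `B` all of whose fibers
are special. -/
def InNS [OrderBot T] (B : Set T) : Prop :=
  ∃ f : T → T, (∀ t ∈ B, t ≠ ⊥ → f t < t) ∧
    ∀ t : T, IsSpecialSet {s : T | s ∈ B ∧ f s = t}

/-- The diamond principle `◊_T` for a tree `T`. -/
def DiamondTree (T : Type*) [PartialOrder T] [OrderBot T] : Prop :=
  ∃ D : T → Set T, (∀ t : T, D t ⊆ Set.Iio t) ∧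
    ∀ X : Set T, ¬ InNS {t : T | X ∩ Set.Iio t = D t}

end TreeDefs

/-- Club subsets of `ω₁`: closed and unbounded in `ω₁`. -/
def IsClubIn (C : Set Ordinal) : Prop :=
  C ⊆ Set.Iio omega1 ∧
  (∀ o : Ordinal, o < omega1 → ∃ b ∈ C, o < b) ∧
  ∀ o : Ordinal, o < omega1 → (C ∩ Set.Iio o).Nonempty →
    IsLUB (C ∩ Set.Iio o) o → o ∈ C

/-- Stationary subsets of `ω₁`: sets meeting every club. -/
def IsStationaryIn (S : Set Ordinal) : Prop :=
  ∀ C : Set Ordinal, IsClubIn C → (S ∩ C).Nonempty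

/-- The diamond principle `◊(S)` for `S ⊆ ω₁`;  `◊` is `DiamondOn (Set.Iio omega1)`. -/
def DiamondOn (S : Set Ordinal) : Prop :=
  ∃ D : Ordinal → Set Ordinal, (∀ o ∈ S, D o ⊆ Set.Iio o) ∧
    ∀ X : Set Ordinal, X ⊆ Set.Iio omega1 →
      IsStationaryIn {o ∈ S | X ∩ Set.Iio o = D o}

/-- Membership in the ideal `NS^S`, where `S ⊆ T` is regarded as a tree with the order
inherited from `T`: there is a map `g : B → S` with `g s < s` for every `s ∈ B` that is not
minimal in `S`, all of whose fibers are special. -/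
def InNSOfSubset {T : Type*} [PartialOrder T] (S B : Set T) : Prop :=
  ∃ g : T → T, (∀ s ∈ B, g s ∈ S) ∧
    (∀ s ∈ B, (∃ u ∈ S, u < s) → g s < s) ∧
    ∀ t : T, IsSpecialSet {s : T | s ∈ B ∧ g s = t}


/-!
Let `g` witness `B ∈ NS^S`. It is regressive in `T` at every point of `B` that is not minimal
in `S`; sending the `S`-minimal points to the root instead gives a regressive map on `B`, whose
fibers are those of `g` enlarged by the `S`-minimal points of `B`. These form an antichain,
so the fibers stay special.
-/

section Special

variable {T : Type*} [PartialOrder T] {U V : Set T}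

theorem IsSpecialSet.mono (hV : IsSpecialSet V) (hUV : U ⊆ V) : IsSpecialSet U := by
  obtain ⟨A, hA, hVA⟩ := hV
  exact ⟨A, hA, hUV.trans hVA⟩

theorem IsAntichain.isSpecialSet (hU : IsAntichain (· ≤ ·) U) : IsSpecialSet U :=
  ⟨fun _ => U, fun _ => hU, subset_iUnion (fun _ : ℕ => U) 0⟩

theorem IsSpecialSet.union (hU : IsSpecialSet U) (hV : IsSpecialSet V) :
    IsSpecialSet (U ∪ V) := by
  obtain ⟨A, hA, hUA⟩ := hU
  obtain ⟨C, hC, hVC⟩ := hV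
  refine ⟨fun n => bif n.bodd then C n.div2 else A n.div2,
    fun n => by cases h : n.bodd <;> simp only [h, cond_true, cond_false, hA, hC], ?_⟩
  rintro s (hs | hs)
  · obtain ⟨n, hn⟩ := mem_iUnion.1 (hUA hs)
    exact mem_iUnion.2 ⟨Nat.bit false n, by rwa [Nat.bodd_bit, Nat.div2_bit]⟩
  · obtain ⟨n, hn⟩ := mem_iUnion.1 (hVC hs)
    exact mem_iUnion.2 ⟨Nat.bit true n, by rwa [Nat.bodd_bit, Nat.div2_bit]⟩

end Special

theorem stmt0_general {T : Type*} [PartialOrder T] [OrderBot T]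
    (S B : Set T) (hBS : B ⊆ S) (hB : InNSOfSubset S B) :
    InNS B := by
  classical
  obtain ⟨g, -, hglt, hgfib⟩ := hB
  refine ⟨fun s => if Minimal (· ∈ S) s then ⊥ else g s, fun s hs hne => ?_, fun t => ?_⟩
  · dsimp only
    split_ifs with hmin
    · exact bot_lt_iff_ne_bot.2 hne
    · obtain ⟨u, hus, huS⟩ := (not_minimal_iff_exists_lt (hBS hs)).1 hmin
      exact hglt s hs ⟨u, huS, hus⟩
  · refine ((hgfib t).union (setOfPred_minimal_antichain (· ∈ S)).isSpecialSet).mono ?_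
    rintro s ⟨hsB, hfs⟩
    dsimp only at hfs
    split_ifs at hfs with hmin
    exacts [Or.inr hmin, Or.inl ⟨hsB, hfs⟩]

/-- If `T` is a tree of height `ω₁` and `S ⊆ T` is an arbitrary subset,
regarded as a tree with the inherited order, then `NS^S ⊆ (NS^T) ↾ S`. -/
theorem stmt0 {T : Type*} [PartialOrder T] [OrderBot T]
    (hchain : PredsChain T) (ht : T → Ordinal)
    (hht : IsHeightFun ht) (hΩ : HeightOmega1 ht)
    (S B : Set T) (hBS : B ⊆ S) (hB : InNSOfSubset S B) :
    InNS B :=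
  stmt0_general S B hBS hB
end

section
/- Let T be a tree of height ω₁ and let S be a subtree of T (a downward-closed subset). Then NS^S = (NS^T)↾S; that is, for every B ⊆ S one has B ∈ NS^S if and only if B ∈ NS^T. -/
open Set

namespace IsSpecialSet

variable {T : Type*} [PartialOrder T]

theorem mono_s1 {U V : Set T} (hUV : U ⊆ V) (hV : IsSpecialSet V) : IsSpecialSet U := by
  obtain ⟨A, hA, hVA⟩ := hV
  exact ⟨A, hA, hUV.trans hVA⟩

theorem insert {U : Set T} (a : T) (hU : IsSpecialSet U) : IsSpecialSet (insert a U) := by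
  obtain ⟨A, hA, hUA⟩ := hU
  refine ⟨fun n => Nat.casesOn (motive := fun _ => Set T) n {a} A, ?_, ?_⟩
  · rintro (_ | n)
    · exact subsingleton_singleton.isAntichain _
    · exact hA n
  · rintro s (rfl | hs)
    · exact mem_iUnion.mpr ⟨0, rfl⟩
    · obtain ⟨n, hn⟩ := mem_iUnion.mp (hUA hs)
      exact mem_iUnion.mpr ⟨n + 1, hn⟩

end IsSpecialSet

section Restriction

variable {T : Type*} [PartialOrder T] [OrderBot T] {S B : Set T}

theorem InNSOfSubset.inNS (hS : IsLowerSet S) (hBS : B ⊆ S) (hB : InNSOfSubset S B) :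
    InNS B := by
  obtain ⟨g, -, hg_lt, hg_special⟩ := hB
  refine ⟨g, fun t htB htne => hg_lt t htB ⟨⊥, ?_, bot_lt_iff_ne_bot.mpr htne⟩, hg_special⟩
  exact hS bot_le (hBS htB)

theorem InNS.inNSOfSubset (hS : IsLowerSet S) (hBS : B ⊆ S) (hB : InNS B) :
    InNSOfSubset S B := by
  classical
  obtain ⟨f, hf_lt, hf_special⟩ := hB
  -- `f ⊥` need not lie in `S`, so `⊥` is sent to itself; this adds at most one point to a fiber.
  refine ⟨fun s => if s = ⊥ then ⊥ else f s, ?_, ?_, ?_⟩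
  · intro s hsB
    dsimp only
    split_ifs with hs
    · exact hS bot_le (hBS hsB)
    · exact hS (hf_lt s hsB hs).le (hBS hsB)
  · rintro s hsB ⟨u, -, hus⟩
    have hs : s ≠ ⊥ := (bot_le.trans_lt hus).ne'
    simpa only [hs, if_false] using hf_lt s hsB hs
  · intro t
    refine ((hf_special t).insert ⊥).mono_s1 ?_
    rintro s ⟨hsB, hst⟩
    by_cases hs : s = ⊥
    · exact Or.inl hs
    · simp only [hs, if_false] at hst
      exact Or.inr ⟨hsB, hst⟩

end Restriction

theorem stmt1_general {T : Type*} [PartialOrder T] [OrderBot T]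
    (S : Set T) (hS : ∀ s t : T, s ≤ t → t ∈ S → s ∈ S)
    (B : Set T) (hBS : B ⊆ S) :
    InNSOfSubset S B ↔ InNS B := by
  have hS' : IsLowerSet S := fun t s hst ht => hS s t hst ht
  exact ⟨InNSOfSubset.inNS hS' hBS, InNS.inNSOfSubset hS' hBS⟩

/-- If `T` is a tree of height `ω₁` and `S` is a subtree of `T`
(a downward-closed subset), then `NS^S = (NS^T) ↾ S`: for every `B ⊆ S`,
`B ∈ NS^S` if and only if `B ∈ NS^T`. -/
theorem stmt1 {T : Type*} [PartialOrder T] [OrderBot T]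
    (hchain : PredsChain T) (ht : T → Ordinal)
    (hht : IsHeightFun ht) (hΩ : HeightOmega1 ht)
    (S : Set T) (hS : ∀ s t : T, s ≤ t → t ∈ S → s ∈ S)
    (B : Set T) (hBS : B ⊆ S) :
    InNSOfSubset S B ↔ InNS B :=
  stmt1_general S hS B hBS
end

section
/- ◊_{2^{<ω₁}} holds (provably in ZFC): there is a family (D_t)_{t ∈ 2^{<ω₁}} with D_t ⊆ t↓ such that for every X ⊆ 2^{<ω₁} the set {t : X ∩ t↓ = D_t} does not belong to NS^{2^{<ω₁}}. -/
open Set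

/-! ### The tree `2^{<ω₁}` -/

theorem omega1_pos : (0 : Ordinal) < omega1 := Ordinal.omega_pos 1

theorem omega1_isLimit : Order.IsSuccLimit omega1 := Cardinal.isSuccLimit_omega 1

/-- A node of the tree `2^{<ω₁}`: a function `s : α → 2` for some `α < ω₁`, coded as a
function on all ordinals which takes the (junk) value `false` from `α` on. -/
structure BSeq : Type 1 where
  dom : Ordinal.{0}
  dom_lt : dom < omega1
  val : Ordinal.{0} → Bool
  val_eq_false : ∀ o : Ordinal.{0}, dom ≤ o → val o = false

/-- The extension order on `2^{<ω₁}`. -/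
instance : PartialOrder BSeq where
  le s t := s.dom ≤ t.dom ∧ ∀ o : Ordinal, o < s.dom → s.val o = t.val o
  le_refl s := ⟨le_rfl, fun _ _ => rfl⟩
  le_trans s t u h h' :=
    ⟨h.1.trans h'.1, fun o ho => (h.2 o ho).trans (h'.2 o (lt_of_lt_of_le ho h.1))⟩
  le_antisymm := by
    rintro ⟨d1, l1, v1, e1⟩ ⟨d2, l2, v2, e2⟩ ⟨hd, hv⟩ ⟨hd', hv'⟩
    obtain rfl : d1 = d2 := le_antisymm hd hd'
    obtain rfl : v1 = v2 := by
      funext o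
      by_cases h : o < d1
      · exact hv o h
      · rw [e1 o (not_lt.1 h), e2 o (not_lt.1 h)]
    rfl

/-- The root of `2^{<ω₁}` is the empty function. -/
instance : OrderBot BSeq where
  bot := ⟨0, omega1_pos, fun _ => false, fun _ _ => rfl⟩
  bot_le t := ⟨by simp, fun o ho => absurd ho (by simp)⟩

/-- The height of a node of `2^{<ω₁}` is its domain. -/
def BSeq.height (t : BSeq) : Ordinal.{0} := t.dom

/-- `t⌢b`, the extension of `t` by one value `b`. -/
noncomputable def BSeq.append (t : BSeq) (b : Bool) : BSeq where
  dom := t.dom + 1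
  dom_lt := by
    rw [Ordinal.add_one_eq_succ]
    exact omega1_isLimit.succ_lt t.dom_lt
  val := fun o => if o < t.dom then t.val o else if o = t.dom then b else false
  val_eq_false := fun o ho => by
    have hdo : t.dom < o :=
      lt_of_lt_of_le (by rw [Ordinal.add_one_eq_succ]; exact Order.lt_succ t.dom) ho
    show (if o < t.dom then t.val o else if o = t.dom then b else false) = false
    rw [if_neg (asymm hdo), if_neg hdo.ne']

/-!
Every node `t` of `2^{<ω₁}` codes a subset of `t↓`, namely `D_t = {s < t : t(ht s) = 1}`. Given
`X`, build the branch `b` of `2^{<ω₁}` by recursion: `b(β) = 1` iff `b ↾ β ∈ X`. Every node on `b`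
guesses `X` correctly, so it suffices that the branch is not in `NS`. A regressive map on the
branch maps it into itself, and each of its special fibers is countable because an antichain meets
a chain in at most one point. Following the map down from any node reaches the root in finitely
many steps, so the branch would be a countable union of countable sets, yet it has length `ω₁`.
-/

theorem IsSpecialSet.subset {T : Type*} [PartialOrder T] {U V : Set T} (hV : IsSpecialSet V)
    (h : U ⊆ V) : IsSpecialSet U :=
  let ⟨A, hA, hVA⟩ := hV
  ⟨A, hA, h.trans hVA⟩

theorem InNS.mono {T : Type*} [PartialOrder T] [OrderBot T] {B B' : Set T} (h : B' ⊆ B)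
    (hB : InNS B) : InNS B' :=
  let ⟨f, hreg, hfib⟩ := hB
  ⟨f, fun t ht => hreg t (h ht), fun t => (hfib t).subset fun _ hs => ⟨h hs.1, hs.2⟩⟩

theorem IsChain.countable_inter_of_isSpecialSet {T : Type*} [PartialOrder T] {C U : Set T}
    (hC : IsChain (· ≤ ·) C) (hU : IsSpecialSet U) : (C ∩ U).Countable := by
  obtain ⟨A, hA, hUA⟩ := hU
  refine (countable_iUnion fun n =>
    (inter_subsingleton_of_isChain_of_isAntichain hC (hA n)).countable).mono ?_
  rintro x ⟨hxC, hxU⟩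
  obtain ⟨n, hn⟩ := mem_iUnion.1 (hUA hxU)
  exact mem_iUnion.2 ⟨n, hxC, hn⟩

theorem countable_of_regressive {α : Type*} [Preorder α] [WellFoundedLT α] {S B : Set α}
    (g : α → α) (hB : B.Countable) (hg : ∀ x ∈ S, x ∉ B → g x < x ∧ g x ∈ S)
    (hfib : ∀ y, {x ∈ S | g x = y}.Countable) : S.Countable := by
  set step : Set α → Set α := fun A => ⋃ y ∈ A, {x ∈ S | g x = y}
  have hcount : ∀ n, (step^[n] B).Countable := by
    intro n
    induction n with
    | zero => exact hB
    | succ n ih =>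
      rw [Function.iterate_succ_apply']
      exact ih.biUnion fun y _ => hfib y
  have hreach : ∀ x ∈ S, ∃ n, x ∈ step^[n] B := by
    intro x
    induction x using WellFoundedLT.induction with
    | _ x ih =>
      intro hx
      by_cases hxB : x ∈ B
      · exact ⟨0, hxB⟩
      obtain ⟨hlt, hgS⟩ := hg x hx hxB
      obtain ⟨n, hn⟩ := ih (g x) hlt hgS
      refine ⟨n + 1, ?_⟩
      rw [Function.iterate_succ_apply']
      exact mem_biUnion hn ⟨hx, rfl⟩
  exact (countable_iUnion hcount).mono fun x hx => mem_iUnion.2 (hreach x hx)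

theorem not_inNS_of_isChain {T : Type*} [PartialOrder T] [OrderBot T] [WellFoundedLT T]
    {C : Set T} (hC : IsChain (· ≤ ·) C) (hlow : IsLowerSet C) (hunc : ¬ C.Countable) :
    ¬ InNS C := by
  rintro ⟨f, hreg, hfib⟩
  refine hunc (countable_of_regressive f (countable_singleton ⊥)
    (fun t ht hbot => ⟨hreg t ht hbot, hlow (hreg t ht hbot).le ht⟩) fun y => ?_)
  refine Countable.mono ?_ (hC.countable_inter_of_isSpecialSet (hfib y))
  exact fun x hx => ⟨hx.1, hx⟩

theorem not_countable_Iio_omega1 : ¬ (Iio omega1.{0}).Countable := by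
  rw [← Cardinal.le_aleph0_iff_set_countable, Cardinal.mk_Iio_ordinal, Cardinal.lift_le_aleph0,
    omega1, Ordinal.card_omega]
  exact not_le.2 Cardinal.aleph0_lt_aleph_one

namespace BSeq

theorem le_def {s t : BSeq} : s ≤ t ↔ s.dom ≤ t.dom ∧ ∀ o < s.dom, s.val o = t.val o :=
  Iff.rfl

theorem ext_of_dom_eq {s t : BSeq} (hd : s.dom = t.dom)
    (hv : ∀ o < s.dom, s.val o = t.val o) : s = t :=
  le_antisymm (le_def.2 ⟨hd.le, hv⟩) (le_def.2 ⟨hd.ge, fun o ho => (hv o (hd ▸ ho)).symm⟩)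

theorem dom_lt_dom {s t : BSeq} (h : s < t) : s.dom < t.dom :=
  h.le.1.lt_of_ne fun hd => h.ne (ext_of_dom_eq hd h.le.2)

instance : WellFoundedLT BSeq :=
  ⟨Subrelation.wf dom_lt_dom (InvImage.wf dom Ordinal.lt_wf)⟩

noncomputable def trunc (v : Ordinal.{0} → Bool) (β : Ordinal.{0}) (hβ : β < omega1) : BSeq where
  dom := β
  dom_lt := hβ
  val o := if o < β then v o else false
  val_eq_false _ ho := if_neg (not_lt.2 ho)

theorem trunc_congr {v w : Ordinal.{0} → Bool} {β : Ordinal.{0}} (hβ : β < omega1)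
    (h : ∀ o < β, v o = w o) : trunc v β hβ = trunc w β hβ :=
  ext_of_dom_eq rfl fun o ho => by simp only [trunc, if_pos (show o < β from ho), h o ho]

def branch (v : Ordinal.{0} → Bool) : Set BSeq := {t | ∀ o < t.dom, t.val o = v o}

theorem isLowerSet_branch (v : Ordinal.{0} → Bool) : IsLowerSet (branch v) :=
  fun _ _ hst ht o ho => (hst.2 o ho).trans (ht o (ho.trans_le hst.1))

theorem isChain_branch (v : Ordinal.{0} → Bool) : IsChain (· ≤ ·) (branch v) := by
  intro s hs t ht _
  rcases le_total s.dom t.dom with h | h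
  · exact Or.inl <| le_def.2 ⟨h, fun o ho => (hs o ho).trans (ht o (ho.trans_le h)).symm⟩
  · exact Or.inr <| le_def.2 ⟨h, fun o ho => (ht o ho).trans (hs o (ho.trans_le h)).symm⟩

theorem trunc_mem_branch (v : Ordinal.{0} → Bool) {β : Ordinal.{0}} (hβ : β < omega1) :
    trunc v β hβ ∈ branch v :=
  fun _ ho => if_pos ho

theorem trunc_dom_of_mem_branch {v : Ordinal.{0} → Bool} {t : BSeq} (ht : t ∈ branch v) :
    trunc v t.dom t.dom_lt = t :=
  ext_of_dom_eq rfl fun o ho => (trunc_mem_branch v t.dom_lt o ho).trans (ht o ho).symm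

theorem not_countable_branch (v : Ordinal.{0} → Bool) : ¬ (branch v).Countable := by
  refine fun h => not_countable_Iio_omega1 (Countable.mono ?_ (h.image dom))
  exact fun β hβ => ⟨trunc v β hβ, trunc_mem_branch v hβ, rfl⟩

open scoped Classical in
noncomputable def charBranch (X : Set BSeq) : Ordinal.{0} → Bool :=
  Ordinal.lt_wf.fix fun β ih =>
    if hβ : β < omega1 then
      decide (trunc (fun o => if ho : o < β then ih o ho else false) β hβ ∈ X)
    else false

theorem charBranch_eq_true_iff (X : Set BSeq) {β : Ordinal.{0}} (hβ : β < omega1) :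
    charBranch X β = true ↔ trunc (charBranch X) β hβ ∈ X := by
  classical
  unfold charBranch
  rw [WellFounded.fix_eq, dif_pos hβ, decide_eq_true_iff]
  congr! 1
  exact trunc_congr hβ fun o ho => dif_pos ho

def diamondSeq (t : BSeq) : Set BSeq := {s | s < t ∧ t.val s.dom = true}

theorem branch_charBranch_subset (X : Set BSeq) :
    branch (charBranch X) ⊆ {t | X ∩ Iio t = diamondSeq t} := by
  intro t ht
  ext s
  simp only [mem_inter_iff, mem_Iio, diamondSeq, mem_ofPred_eq]
  refine and_comm.trans (and_congr_right fun hst => ?_)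
  have hs : s ∈ branch (charBranch X) := isLowerSet_branch _ hst.le ht
  rw [ht s.dom (dom_lt_dom hst), charBranch_eq_true_iff X s.dom_lt, trunc_dom_of_mem_branch hs]

end BSeq

/-- `◊_{2^{<ω₁}}` holds (provably in ZFC): there is a family
`(D_t)_{t ∈ 2^{<ω₁}}` with `D_t ⊆ t↓` such that for every `X ⊆ 2^{<ω₁}` the set
`{t : X ∩ t↓ = D_t}` does not belong to `NS^{2^{<ω₁}}`. -/
theorem stmt12 : DiamondTree BSeq :=
  ⟨BSeq.diamondSeq, fun _ _ hs => hs.1, fun X hNS =>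
    not_inNS_of_isChain (BSeq.isChain_branch _) (BSeq.isLowerSet_branch _)
      (BSeq.not_countable_branch _) (hNS.mono (BSeq.branch_charBranch_subset X))⟩
end
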